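/- Let φ : ℝ → ℝ be continuously differentiable and strictly increasing, let a ∈ ℝ, l > 0, T ∈ ℝ, and let p₁, p₂ ≥ 1 be integers with reverse-iterate endpoints A_{p_i} < B_{p_i} satisfying φ^[p_i](A_{p_i}) = T and φ^[p_i](B_{p_i}) = T + 2l for i = 1, 2. If {f_n}_{n=0}^∞ is an orthogonal system in L²([a, a+2l]), then the second-generation functions f_n^{p₁,p₂}(t) := f_n(u_{p₁}(u_{p₂}(t))) · w_{p₁}(u_{p₂}(t)) · w_{p₂}(t) satisfy ∫_a^{a+2l} f_m^{p₁,p₂}(t) f_n^{p₁,p₂}(t) dt = 0 for all m ≠ n, so {f_n^{p₁,p₂}}_{n=0}^∞ is again an orthogonal system in L²([a, a+2l]). -/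

import Mathlib

open MeasureTheory Set

/-- The affine map `ρ_p` sending `[a, a+2l]` onto `[A, B]`. -/
noncomputable def rhoMap (A B a l : ℝ) (t : ℝ) : ℝ := (B - A) / (2 * l) * (t - a) + A

/-- The map `u_p(t) = φ^[p](ρ_p(t)) − T + a`. -/
noncomputable def uMap (φ : ℝ → ℝ) (p : ℕ) (A B a l T : ℝ) (t : ℝ) : ℝ :=
  φ^[p] (rhoMap A B a l t) - T + a

/-- The weight `w_p(t) = ∏_{r=0}^{p−1} √(φ′(φ^[r](ρ_p(t))))`. -/
noncomputable def wMap (φ : ℝ → ℝ) (p : ℕ) (A B a l : ℝ) (t : ℝ) : ℝ :=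
  ∏ r ∈ Finset.range p, Real.sqrt (deriv φ (φ^[r] (rhoMap A B a l t)))

/-! The substitution `s = u_p(t)` maps `[a, a+2l]` monotonically onto itself, and since
`(φ^[p])' = ∏_{r<p} φ'(φ^[r])` its derivative is `(B_p − A_p)/(2l) · w_p²`. So
`∫ g(u_p(t)) w_p(t)² dt = 2l/(B_p − A_p) · ∫ g(s) ds` for every `g`. Applying this with `p₂` and
then with `p₁` turns the integral of `f_m^{p₁,p₂} f_n^{p₁,p₂}` into a positive multiple of
`∫ f_m f_n = 0`. -/

theorem hasDerivAt_iterate_of_differentiable {𝕜 : Type*} [NontriviallyNormedField 𝕜]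
    {φ : 𝕜 → 𝕜} (hφ : Differentiable 𝕜 φ) (p : ℕ) (x : 𝕜) :
    HasDerivAt φ^[p] (∏ r ∈ Finset.range p, deriv φ (φ^[r] x)) x := by
  induction p with
  | zero => simpa using hasDerivAt_id x
  | succ p ih =>
    rw [Function.iterate_succ', Finset.prod_range_succ, mul_comm]
    exact (hφ (φ^[p] x)).hasDerivAt.comp x ih

theorem hasDerivAt_rhoMap (A B a l t : ℝ) :
    HasDerivAt (rhoMap A B a l) ((B - A) / (2 * l)) t := by
  have h := (((hasDerivAt_id t).sub_const a).const_mul ((B - A) / (2 * l))).add_const A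
  rwa [mul_one] at h

theorem rhoMap_left (A B a l : ℝ) : rhoMap A B a l a = A := by
  simp [rhoMap]

theorem rhoMap_right {l : ℝ} (hl : l ≠ 0) (A B a : ℝ) : rhoMap A B a l (a + 2 * l) = B := by
  simp only [rhoMap, add_sub_cancel_left]
  field_simp
  ring

section

variable {φ : ℝ → ℝ} {p : ℕ} {A B a l T : ℝ}

theorem wMap_sq (hmono : Monotone φ) (t : ℝ) :
    wMap φ p A B a l t ^ 2 = ∏ r ∈ Finset.range p, deriv φ (φ^[r] (rhoMap A B a l t)) := by
  rw [wMap, ← Finset.prod_pow]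
  exact Finset.prod_congr rfl fun _ _ => Real.sq_sqrt hmono.deriv_nonneg

theorem hasDerivAt_uMap (hφ : Differentiable ℝ φ) (hmono : Monotone φ) (t : ℝ) :
    HasDerivAt (uMap φ p A B a l T) ((B - A) / (2 * l) * wMap φ p A B a l t ^ 2) t := by
  rw [wMap_sq hmono, mul_comm]
  exact (((hasDerivAt_iterate_of_differentiable hφ p _).comp t
    (hasDerivAt_rhoMap A B a l t)).sub_const T).add_const a

theorem uMap_left (hA : φ^[p] A = T) : uMap φ p A B a l T a = a := by
  simp [uMap, rhoMap_left, hA]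

theorem uMap_right (hl : l ≠ 0) (hB : φ^[p] B = T + 2 * l) :
    uMap φ p A B a l T (a + 2 * l) = a + 2 * l := by
  rw [uMap, rhoMap_right hl, hB]
  ring

theorem integral_comp_uMap_mul_wMap_sq (hφ : Differentiable ℝ φ) (hmono : Monotone φ)
    (hl : 0 < l) (hAB : A < B) (hA : φ^[p] A = T) (hB : φ^[p] B = T + 2 * l) (g : ℝ → ℝ) :
    ∫ t in a..(a + 2 * l), g (uMap φ p A B a l T t) * wMap φ p A B a l t ^ 2
      = 2 * l / (B - A) * ∫ s in a..(a + 2 * l), g s := by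
  have hsubst : ∫ t in a..(a + 2 * l),
      ((B - A) / (2 * l) * wMap φ p A B a l t ^ 2) • (g ∘ uMap φ p A B a l T) t
        = ∫ s in a..(a + 2 * l), g s := by
    have hcont : Continuous (uMap φ p A B a l T) :=
      continuous_iff_continuousAt.2 fun t => (hasDerivAt_uMap hφ hmono t).continuousAt
    rw [intervalIntegral.integral_deriv_smul_comp_of_deriv_nonneg hcont.continuousOn
        (fun t _ => hasDerivAt_uMap hφ hmono t) (fun t _ => by positivity),
      uMap_left hA, uMap_right hl.ne' hB]
  rw [← hsubst, ← inv_div, ← intervalIntegral.integral_const_mul]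
  congr 1 with t
  simp only [smul_eq_mul, Function.comp_apply]
  field_simp [(sub_pos.2 hAB).ne']

end

theorem second_generation_orthogonal_general
    (φ : ℝ → ℝ) (hφ : ContDiff ℝ 1 φ) (hmono : StrictMono φ)
    (a l T : ℝ) (hl : 0 < l) (p₁ p₂ : ℕ)
    (A₁ B₁ A₂ B₂ : ℝ) (hAB₁ : A₁ < B₁) (hAB₂ : A₂ < B₂)
    (hA₁ : φ^[p₁] A₁ = T) (hB₁ : φ^[p₁] B₁ = T + 2 * l)
    (hA₂ : φ^[p₂] A₂ = T) (hB₂ : φ^[p₂] B₂ = T + 2 * l)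
    (f : ℕ → ℝ → ℝ)
    (horth : ∀ m n, m ≠ n → ∫ t in a..(a + 2 * l), f m t * f n t = 0) :
    ∀ m n, m ≠ n →
      ∫ t in a..(a + 2 * l),
        (f m (uMap φ p₁ A₁ B₁ a l T (uMap φ p₂ A₂ B₂ a l T t)) *
            wMap φ p₁ A₁ B₁ a l (uMap φ p₂ A₂ B₂ a l T t) * wMap φ p₂ A₂ B₂ a l t) *
        (f n (uMap φ p₁ A₁ B₁ a l T (uMap φ p₂ A₂ B₂ a l T t)) *
            wMap φ p₁ A₁ B₁ a l (uMap φ p₂ A₂ B₂ a l T t) * wMap φ p₂ A₂ B₂ a l t) = 0 := by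
  intro m n hmn
  have hdiff := hφ.differentiable one_ne_zero
  let u₁ := uMap φ p₁ A₁ B₁ a l T
  let w₁ := wMap φ p₁ A₁ B₁ a l
  calc _ = ∫ t in a..(a + 2 * l), (fun s => f m (u₁ s) * f n (u₁ s) * w₁ s ^ 2)
          (uMap φ p₂ A₂ B₂ a l T t) * wMap φ p₂ A₂ B₂ a l t ^ 2 := by
        congr 1 with t
        ring
    _ = 2 * l / (B₂ - A₂) * (2 * l / (B₁ - A₁) * ∫ s in a..(a + 2 * l), f m s * f n s) := by
        rw [integral_comp_uMap_mul_wMap_sq hdiff hmono.monotone hl hAB₂ hA₂ hB₂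
            (fun s => f m (u₁ s) * f n (u₁ s) * w₁ s ^ 2),
          integral_comp_uMap_mul_wMap_sq hdiff hmono.monotone hl hAB₁ hA₁ hB₁
            (fun s => f m s * f n s)]
    _ = 0 := by rw [horth m n hmn, mul_zero, mul_zero]

/-- The second-generation transform of an `L²`-orthogonal system on
`[a, a+2l]` is again an orthogonal system in `L²([a, a+2l])`. -/
theorem second_generation_orthogonal
    (φ : ℝ → ℝ) (hφ : ContDiff ℝ 1 φ) (hmono : StrictMono φ)
    (a l T : ℝ) (hl : 0 < l) (p₁ p₂ : ℕ) (hp₁ : 1 ≤ p₁) (hp₂ : 1 ≤ p₂)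
    (A₁ B₁ A₂ B₂ : ℝ) (hAB₁ : A₁ < B₁) (hAB₂ : A₂ < B₂)
    (hA₁ : φ^[p₁] A₁ = T) (hB₁ : φ^[p₁] B₁ = T + 2 * l)
    (hA₂ : φ^[p₂] A₂ = T) (hB₂ : φ^[p₂] B₂ = T + 2 * l)
    (f : ℕ → ℝ → ℝ)
    (hf : ∀ n, MemLp (f n) 2 (volume.restrict (Set.Ioc a (a + 2 * l))))
    (horth : ∀ m n, m ≠ n → ∫ t in a..(a + 2 * l), f m t * f n t = 0) :
    ∀ m n, m ≠ n →
      ∫ t in a..(a + 2 * l),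
        (f m (uMap φ p₁ A₁ B₁ a l T (uMap φ p₂ A₂ B₂ a l T t)) *
            wMap φ p₁ A₁ B₁ a l (uMap φ p₂ A₂ B₂ a l T t) * wMap φ p₂ A₂ B₂ a l t) *
        (f n (uMap φ p₁ A₁ B₁ a l T (uMap φ p₂ A₂ B₂ a l T t)) *
            wMap φ p₁ A₁ B₁ a l (uMap φ p₂ A₂ B₂ a l T t) * wMap φ p₂ A₂ B₂ a l t) = 0 :=
  second_generation_orthogonal_general φ hφ hmono a l T hl p₁ p₂ A₁ B₁ A₂ B₂ hAB₁ hAB₂ hA₁ hB₁ hA₂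
    hB₂ f horth
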